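/- Let V be a finite-dimensional complex inner product space with a Hermitian involution G (G² = id, G* = G) and a quaternionic structure J (complex anti-linear, J² = -id) that anti-commutes with G. Let A be a Hermitian operator anti-commuting with G and commuting with J. Then the real dimension of ker(A) ∩ V₊ equals the complex dimension of ker(A), where V₊ is the +1 eigenspace of G and ker(A) ∩ V₊ is regarded as a real subspace. -/
import Mathlib

/-- Let `V` be a finite-dimensional complex inner product space
with a Hermitian involution `G` (`G² = id`, `G` self-adjoint) and a quaternionic
structure `J` (complex anti-linear, `J² = -id`) anti-commuting with `G`.  Let
`A` be a Hermitian operator anti-commuting with `G` and commuting with `J`.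
Then the real dimension of `ker A ∩ V₊` (regarded as a real subspace, where
`V₊ = ker (G - id)`) equals the complex dimension of `ker A`. -/
theorem real_dim_ker_inter_plus_eq_complex_dim_ker
    (V : Type*) [NormedAddCommGroup V] [InnerProductSpace ℂ V]
    [FiniteDimensional ℂ V]
    (G A : V →ₗ[ℂ] V)
    (J : V →ₛₗ[starRingEnd ℂ] V)
    (hG : G.IsSymmetric) (hG2 : G ∘ₗ G = LinearMap.id)
    (hJ2 : ∀ v : V, J (J v) = -v)
    (hGJ : ∀ v : V, G (J v) = -J (G v))
    (hA : A.IsSymmetric)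
    (hGA : G ∘ₗ A = -(A ∘ₗ G))
    (hAJ : ∀ v : V, A (J v) = J (A v)) :
    Module.finrank ℝ
      ((LinearMap.ker A ⊓ LinearMap.ker (G - LinearMap.id) :
        Submodule ℂ V).restrictScalars ℝ) =
    Module.finrank ℂ (LinearMap.ker A) := by
  classical
  set K : Submodule ℂ V := LinearMap.ker A
  set P : Submodule ℂ V := LinearMap.ker (G - LinearMap.id)
  set Q : Submodule ℂ V := LinearMap.ker (G + LinearMap.id)
  have hGA' : ∀ v, G (A v) = -A (G v) := by
    intro v
    have := congrFun (congrArg (fun f => f.toFun) hGA) v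
    simpa using this
  have hG2' : ∀ v, G (G v) = v := by
    intro v
    have := congrFun (congrArg (fun f => f.toFun) hG2) v
    simpa using this
  have hJinj : Function.Injective J := by
    intro x y h
    have : J (J x) = J (J y) := congrArg J h
    rw [hJ2, hJ2] at this
    exact neg_injective this
  -- membership characterizations
  have hPmem : ∀ v, v ∈ P ↔ G v = v := by
    intro v
    simp [P, LinearMap.mem_ker, sub_eq_zero]
  have hQmem : ∀ v, v ∈ Q ↔ G v = -v := by
    intro v
    constructor
    · intro h
      have : G v + v = 0 := by simpa [Q, LinearMap.mem_ker] using h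
      linear_combination (norm := abel) this
    · intro h
      simp [Q, LinearMap.mem_ker, h]
  -- J maps K ⊓ P into K ⊓ Q and vice versa
  have hJKP : ∀ v, v ∈ K ⊓ P → J v ∈ K ⊓ Q := by
    rintro v ⟨hvK, hvP⟩
    refine ⟨?_, ?_⟩
    · have : A (J v) = J (A v) := hAJ v
      have hv0 : A v = 0 := hvK
      simp [LinearMap.mem_ker, K, this, hv0]
    · exact (hQmem _).mpr (by rw [hGJ v, (hPmem v).mp hvP])
  have hJKQ : ∀ v, v ∈ K ⊓ Q → J v ∈ K ⊓ P := by
    rintro v ⟨hvK, hvQ⟩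
    refine ⟨?_, ?_⟩
    · have hv0 : A v = 0 := hvK
      simp [LinearMap.mem_ker, K, hAJ v, hv0]
    · exact (hPmem _).mpr (by rw [hGJ v, (hQmem v).mp hvQ, map_neg, neg_neg])
  -- J as an ℝ-linear map
  let Jr : V →ₗ[ℝ] V :=
    { toFun := J
      map_add' := fun x y => J.map_add x y
      map_smul' := fun r v => by
        have : J ((r : ℂ) • v) = (starRingEnd ℂ (r : ℂ)) • J v := map_smulₛₗ J _ v
        simpa [Complex.coe_smul] using this }
  -- real-linear injections between K ⊓ P and K ⊓ Q
  have hle1 : Module.finrank ℝ ((K ⊓ P).restrictScalars ℝ)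
      ≤ Module.finrank ℝ ((K ⊓ Q).restrictScalars ℝ) := by
    have h : ∀ x ∈ (K ⊓ P).restrictScalars ℝ, Jr x ∈ (K ⊓ Q).restrictScalars ℝ :=
      fun x hx => hJKP x hx
    have hinj : Function.Injective (Jr.restrict h) := by
      intro x y hxy
      have := congrArg Subtype.val hxy
      exact Subtype.ext (hJinj this)
    exact LinearMap.finrank_le_finrank_of_injective hinj
  have hle2 : Module.finrank ℝ ((K ⊓ Q).restrictScalars ℝ)
      ≤ Module.finrank ℝ ((K ⊓ P).restrictScalars ℝ) := by
    have h : ∀ x ∈ (K ⊓ Q).restrictScalars ℝ, Jr x ∈ (K ⊓ P).restrictScalars ℝ :=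
      fun x hx => hJKQ x hx
    have hinj : Function.Injective (Jr.restrict h) := by
      intro x y hxy
      have := congrArg Subtype.val hxy
      exact Subtype.ext (hJinj this)
    exact LinearMap.finrank_le_finrank_of_injective hinj
  have hPQdim : Module.finrank ℂ ↥(K ⊓ P) = Module.finrank ℂ ↥(K ⊓ Q) := by
    have h1 : Module.finrank ℝ ((K ⊓ P).restrictScalars ℝ)
        = Module.finrank ℝ ((K ⊓ Q).restrictScalars ℝ) := le_antisymm hle1 hle2
    have e1 : Module.finrank ℝ ((K ⊓ P).restrictScalars ℝ)
        = 2 * Module.finrank ℂ ↥(K ⊓ P) := finrank_real_of_complex ↥(K ⊓ P)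
    have e2 : Module.finrank ℝ ((K ⊓ Q).restrictScalars ℝ)
        = 2 * Module.finrank ℂ ↥(K ⊓ Q) := finrank_real_of_complex ↥(K ⊓ Q)
    omega
  -- decomposition K = (K ⊓ P) ⊔ (K ⊓ Q)
  have hdisj : (K ⊓ P) ⊓ (K ⊓ Q) = ⊥ := by
    apply (Submodule.eq_bot_iff _).mpr
    rintro v ⟨⟨_, hvP⟩, ⟨_, hvQ⟩⟩
    have h1 : G v = v := (hPmem v).mp hvP
    have h2 : G v = -v := (hQmem v).mp hvQ
    have : v = -v := h1.symm.trans h2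
    have h2v : (2 : ℂ) • v = 0 := by
      have := add_eq_zero_iff_eq_neg.mpr this
      rw [two_smul]
      exact this
    have := smul_eq_zero.mp h2v
    rcases this with h | h
    · exact absurd h (by norm_num)
    · exact h
  have hsup : (K ⊓ P) ⊔ (K ⊓ Q) = K := by
    apply le_antisymm
    · exact sup_le inf_le_left inf_le_left
    · intro v hv
      have hGvK : G v ∈ K := by
        have h1 : A v = 0 := hv
        have h2 : G (A v) = -A (G v) := hGA' v
        have : A (G v) = 0 := by
          rw [h1, map_zero] at h2
          simpa using h2.symm
        simpa [K, LinearMap.mem_ker] using this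
      have hvdec : v = ((2 : ℂ)⁻¹) • (v + G v) + ((2 : ℂ)⁻¹) • (v - G v) := by
        module
      rw [hvdec]
      apply Submodule.add_mem
      · apply Submodule.mem_sup_left
        refine Submodule.smul_mem _ _ ⟨K.add_mem hv hGvK, (hPmem _).mpr ?_⟩
        simp [map_add, hG2' v, add_comm]
      · apply Submodule.mem_sup_right
        refine Submodule.smul_mem _ _ ⟨K.sub_mem hv hGvK, (hQmem _).mpr ?_⟩
        simp [map_sub, hG2' v]
  have hsum := Submodule.finrank_sup_add_finrank_inf_eq (K ⊓ P) (K ⊓ Q)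
  rw [hsup, hdisj, finrank_bot] at hsum
  have e1 : Module.finrank ℝ ((K ⊓ P).restrictScalars ℝ)
      = 2 * Module.finrank ℂ ↥(K ⊓ P) := finrank_real_of_complex ↥(K ⊓ P)
  rw [e1, two_mul, hPQdim]
  omega
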